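/- Let ρ₀, ρ₁ be densities of mass V with ρ₁ > 0 λ-almost everywhere, and assume ρ₀²/ρ₁ is λ-integrable. With the χ²-distance d_χ(ρ₀, ρ₁) := ∫ (ρ₀ − ρ₁)²/ρ₁ dλ, the Fisher–Rao distance satisfies d_F(ρ₀, ρ₁) ≤ √((π/2) · d_χ(ρ₀, ρ₁)). (Item 9 of the Proposition in Appendix B.) -/

import Mathlib

open MeasureTheory Real Set

/-- A density of mass `V`: a measurable nonnegative function with total integral `V`. -/
def IsDensity {X : Type*} [MeasurableSpace X] (lam : Measure X) (V : ℝ) (ρ : X → ℝ) : Prop :=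
  Measurable ρ ∧ (∀ x, 0 ≤ ρ x) ∧ (∫ x, ρ x ∂lam) = V

/-- The Fisher–Rao (spherical Hellinger) distance between two densities. -/
noncomputable def fisherRaoDist {X : Type*} [MeasurableSpace X] (lam : Measure X) (V : ℝ)
    (ρ₀ ρ₁ : X → ℝ) : ℝ :=
  Real.sqrt V * Real.arccos ((1 / V) * ∫ x, Real.sqrt (ρ₀ x * ρ₁ x) ∂lam)

/-- The `χ²`-distance `∫ (ρ₀ − ρ₁)²/ρ₁ dλ`. -/
noncomputable def chiSqDist {X : Type*} [MeasurableSpace X] (lam : Measure X)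
    (ρ₀ ρ₁ : X → ℝ) : ℝ :=
  ∫ x, (ρ₀ x - ρ₁ x) ^ 2 / ρ₁ x ∂lam

/-!
Put `s = (1/V) ∫ √(ρ₀ρ₁) ∈ [0, 1]` and `θ = arccos s ∈ [0, π/2]`, so that `d_F = √V θ`.
Jordan's inequality `sin t ≥ 2t/π` integrates to `θ² ≤ π (1 - cos θ) = π (1 - s)`, whence
`d_F² ≤ π (V - ∫ √(ρ₀ρ₁)) = (π/2) ∫ (√ρ₀ - √ρ₁)²`. Finally `(√ρ₀ - √ρ₁)² ≤ (ρ₀ - ρ₁)²/ρ₁`,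
because `ρ₀ - ρ₁ = (√ρ₀ - √ρ₁)(√ρ₀ + √ρ₁)` and `(√ρ₀ + √ρ₁)² ≥ ρ₁`.
-/

namespace Real

lemma sq_le_pi_mul_one_sub_cos {θ : ℝ} (h0 : 0 ≤ θ) (h1 : θ ≤ π / 2) :
    θ ^ 2 ≤ π * (1 - cos θ) := by
  let F : ℝ → ℝ := fun t => π * (1 - cos t) - t ^ 2
  have hF (t : ℝ) : HasDerivAt F (π * sin t - 2 * t) t :=
    ((((hasDerivAt_cos t).const_sub 1).const_mul π).fun_sub (hasDerivAt_pow 2 t)).congr_deriv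
      (by simp)
  have hmono : MonotoneOn F (Icc 0 (π / 2)) := by
    refine monotoneOn_of_hasDerivWithinAt_nonneg (convex_Icc _ _)
      (fun t _ => (hF t).continuousAt.continuousWithinAt) (fun t _ => (hF t).hasDerivWithinAt)
      fun t ht => ?_
    rw [interior_Icc] at ht
    have hJordan := mul_le_sin ht.1.le ht.2.le
    rw [div_mul_eq_mul_div, div_le_iff₀ pi_pos] at hJordan
    linarith
  simpa [F] using hmono ⟨le_rfl, by positivity⟩ ⟨h0, h1⟩ h0

lemma sq_arccos_le_pi_mul_one_sub {s : ℝ} (h0 : 0 ≤ s) (h1 : s ≤ 1) :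
    arccos s ^ 2 ≤ π * (1 - s) := by
  simpa [cos_arccos (by linarith) h1] using
    sq_le_pi_mul_one_sub_cos (arccos_nonneg s) (arccos_le_pi_div_two.2 h0)

lemma sqrt_mul_le_add_div_two {a b : ℝ} (ha : 0 ≤ a) (hb : 0 ≤ b) :
    √(a * b) ≤ (a + b) / 2 := by
  rw [sqrt_mul ha]
  nlinarith [sq_sqrt ha, sq_sqrt hb, sq_nonneg (√a - √b)]

lemma sqrt_mul_le_abs_add_abs_div_two (a b : ℝ) : √(a * b) ≤ (|a| + |b|) / 2 :=
  calc √(a * b) ≤ √(|a| * |b|) := sqrt_le_sqrt (abs_mul a b ▸ le_abs_self _)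
    _ ≤ (|a| + |b|) / 2 := sqrt_mul_le_add_div_two (abs_nonneg a) (abs_nonneg b)

lemma add_sub_two_mul_sqrt_mul_le {a b : ℝ} (ha : 0 ≤ a) (hb : 0 < b) :
    a + b - 2 * √(a * b) ≤ (a - b) ^ 2 / b := by
  rw [le_div_iff₀ hb, sqrt_mul ha]
  have hsa := sq_sqrt ha
  have hsb := sq_sqrt hb.le
  have hfactor : (a - b) ^ 2 = (√a - √b) ^ 2 * (√a + √b) ^ 2 := by
    rw [← mul_pow]; congr 1; linear_combination -hsa + hsb
  have hsum : b ≤ (√a + √b) ^ 2 := by nlinarith [sqrt_nonneg a, sqrt_nonneg b]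
  calc (a + b - 2 * (√a * √b)) * b = (√a - √b) ^ 2 * b := by
        linear_combination -b * hsa - b * hsb
    _ ≤ (√a - √b) ^ 2 * (√a + √b) ^ 2 := by gcongr
    _ = (a - b) ^ 2 := hfactor.symm

end Real

section Integral

variable {X : Type*} [MeasurableSpace X] {μ : Measure X} {f g : X → ℝ}

lemma MeasureTheory.Integrable.sqrt_mul (hf : Integrable f μ) (hg : Integrable g μ) :
    Integrable (fun x => √(f x * g x)) μ := by
  refine ((hf.norm.add hg.norm).div_const 2).mono'
    (continuous_sqrt.comp_aestronglyMeasurable (hf.1.mul hg.1)) (.of_forall fun x => ?_)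
  rw [norm_of_nonneg (sqrt_nonneg _)]
  exact sqrt_mul_le_abs_add_abs_div_two (f x) (g x)

lemma MeasureTheory.Integrable.sub_sq_div (hf2 : Integrable (fun x => f x ^ 2 / g x) μ)
    (hf : Integrable f μ) (hg : Integrable g μ) (hg0 : ∀ᵐ x ∂μ, g x ≠ 0) :
    Integrable (fun x => (f x - g x) ^ 2 / g x) μ := by
  refine ((hf2.sub (hf.const_mul 2)).add hg).congr ?_
  filter_upwards [hg0] with x hx
  simp only [Pi.add_apply, Pi.sub_apply]
  field_simp
  ring

lemma integral_sqrt_mul_le_add_div_two (hf : Integrable f μ) (hg : Integrable g μ)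
    (hf0 : 0 ≤ᵐ[μ] f) (hg0 : 0 ≤ᵐ[μ] g) :
    ∫ x, √(f x * g x) ∂μ ≤ ((∫ x, f x ∂μ) + ∫ x, g x ∂μ) / 2 := by
  rw [← integral_add hf hg, ← integral_div]
  refine integral_mono_ae (hf.sqrt_mul hg) ((hf.add hg).div_const 2) ?_
  filter_upwards [hf0, hg0] with x hfx hgx
  exact sqrt_mul_le_add_div_two hfx hgx

lemma integral_add_sub_two_mul_integral_sqrt_mul_le (hf : Integrable f μ) (hg : Integrable g μ)
    (hχ : Integrable (fun x => (f x - g x) ^ 2 / g x) μ)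
    (hf0 : 0 ≤ᵐ[μ] f) (hg0 : ∀ᵐ x ∂μ, 0 < g x) :
    (∫ x, f x ∂μ) + (∫ x, g x ∂μ) - 2 * ∫ x, √(f x * g x) ∂μ ≤
      ∫ x, (f x - g x) ^ 2 / g x ∂μ := by
  have hmono := integral_mono_ae ((hf.add hg).sub ((hf.sqrt_mul hg).const_mul 2)) hχ <| by
    filter_upwards [hf0, hg0] with x hfx hgx
    exact add_sub_two_mul_sqrt_mul_le hfx hgx
  rwa [integral_sub' (hf.add hg) ((hf.sqrt_mul hg).const_mul 2), integral_add' hf hg,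
    integral_const_mul] at hmono

end Integral

lemma IsDensity.integrable {X : Type*} [MeasurableSpace X] {lam : Measure X} {V : ℝ}
    {ρ : X → ℝ} (h : IsDensity lam V ρ) (hV : V ≠ 0) : Integrable ρ lam :=
  .of_integral_ne_zero (h.2.2 ▸ hV)

theorem fisherRao_le_sqrt_chiSq_general
    {X : Type*} [MeasurableSpace X] (lam : Measure X)
    (V : ℝ) (hV : 0 < V)
    (ρ₀ ρ₁ : X → ℝ) (h₀ : IsDensity lam V ρ₀) (h₁ : IsDensity lam V ρ₁)
    (h₁pos : ∀ᵐ x ∂lam, 0 < ρ₁ x)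
    (hint : Integrable (fun x => (ρ₀ x) ^ 2 / ρ₁ x) lam) :
    fisherRaoDist lam V ρ₀ ρ₁ ≤ Real.sqrt ((π / 2) * chiSqDist lam ρ₀ ρ₁) := by
  have hint₀ := h₀.integrable hV.ne'
  have hint₁ := h₁.integrable hV.ne'
  have hρ₀ : 0 ≤ᵐ[lam] ρ₀ := .of_forall h₀.2.1
  have hρ₁ : 0 ≤ᵐ[lam] ρ₁ := .of_forall h₁.2.1
  set S := ∫ x, √(ρ₀ x * ρ₁ x) ∂lam
  have hSV : S ≤ V := by
    simpa [h₀.2.2, h₁.2.2] using integral_sqrt_mul_le_add_div_two hint₀ hint₁ hρ₀ hρ₁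
  have hχ : 2 * (V - S) ≤ chiSqDist lam ρ₀ ρ₁ := by
    have := integral_add_sub_two_mul_integral_sqrt_mul_le hint₀ hint₁
      (hint.sub_sq_div hint₀ hint₁ (h₁pos.mono fun x hx => hx.ne')) hρ₀ h₁pos
    rw [h₀.2.2, h₁.2.2] at this
    unfold chiSqDist
    linarith
  have harccos : arccos (1 / V * S) ^ 2 ≤ π * (1 - 1 / V * S) :=
    sq_arccos_le_pi_mul_one_sub (by positivity) (by rwa [one_div_mul_eq_div, div_le_one hV])
  refine le_sqrt_of_sq_le ?_
  calc (√V * arccos (1 / V * S)) ^ 2 = V * arccos (1 / V * S) ^ 2 := by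
        rw [mul_pow, sq_sqrt hV.le]
    _ ≤ V * (π * (1 - 1 / V * S)) := by gcongr
    _ = π / 2 * (2 * (V - S)) := by field_simp
    _ ≤ π / 2 * chiSqDist lam ρ₀ ρ₁ := by gcongr

/-- **Comparison of the Fisher–Rao distance and the `χ²`-distance** (item 9 of the
Proposition in Appendix B): `d_F ≤ √((π/2)·d_χ)`. -/
theorem fisherRao_le_sqrt_chiSq
    {X : Type*} [MeasurableSpace X] (lam : Measure X) [IsFiniteMeasure lam]
    (V : ℝ) (hV : 0 < V) (hVmass : (lam Set.univ).toReal = V)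
    (ρ₀ ρ₁ : X → ℝ) (h₀ : IsDensity lam V ρ₀) (h₁ : IsDensity lam V ρ₁)
    (h₁pos : ∀ᵐ x ∂lam, 0 < ρ₁ x)
    (hint : Integrable (fun x => (ρ₀ x) ^ 2 / ρ₁ x) lam) :
    fisherRaoDist lam V ρ₀ ρ₁ ≤ Real.sqrt ((π / 2) * chiSqDist lam ρ₀ ρ₁) :=
  fisherRao_le_sqrt_chiSq_general lam V hV ρ₀ ρ₁ h₀ h₁ h₁pos hint
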